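/- Let P₁ = p₁ I with p₁ > 0 and let X₁,…,X_{n} ∈ R^d with ‖X_s‖ ≤ D_X for all s. Define A_t = P₁⁻¹ + Σ_{s=1}^{t} X_s X_sᵀ. Then Σ_{t=1}^{n} X_tᵀ A_t⁻¹ X_t ≤ d · log(1 + n p₁ D_X²). -/

import Mathlib

open Matrix Finset

private lemma psd_vecMulVec {d : ℕ} (x : Fin d → ℝ) : (vecMulVec x x).PosSemidef := by
  have h := Matrix.posSemidef_self_mul_conjTranspose (Matrix.replicateCol Unit x)
  rwa [Matrix.conjTranspose_replicateCol, star_trivial, ← Matrix.vecMulVec_eq] at h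

private lemma psd_smul {d : ℕ} {M : Matrix (Fin d) (Fin d) ℝ} (hM : M.PosSemidef) {c : ℝ}
    (hc : 0 ≤ c) : (c • M).PosSemidef := by
  refine ⟨?_, fun y => ?_⟩
  · have h1 := hM.1
    unfold Matrix.IsHermitian at h1 ⊢
    rw [conjTranspose_smul, h1]
    simp
  · exact (hM.smul hc).2 y

private lemma psd_sum {d : ℕ} (s : Finset ℕ) (f : ℕ → Matrix (Fin d) (Fin d) ℝ)
    (h : ∀ i ∈ s, (f i).PosSemidef) : (∑ i ∈ s, f i).PosSemidef := by
  classical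
  induction s using Finset.induction_on with
  | empty =>
    simp only [Finset.sum_empty]
    exact ⟨Matrix.isHermitian_zero, fun y => by simp⟩
  | insert _ _ hns ih =>
    rw [Finset.sum_insert hns]
    exact (h _ (Finset.mem_insert_self _ _)).add
      (ih fun i hi => h i (Finset.mem_insert_of_mem hi))

/-- matrix determinant lemma for a rank-one update. -/
private lemma det_add_vecMulVec {d : ℕ} {B : Matrix (Fin d) (Fin d) ℝ} (hB : IsUnit B.det)
    (u v : Fin d → ℝ) :
    (B + vecMulVec u v).det = B.det * (1 + v ⬝ᵥ B⁻¹ *ᵥ u) := by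
  rw [Matrix.vecMulVec_eq Unit, Matrix.det_add_replicateCol_mul_replicateRow hB]
  congr 1
  rw [Matrix.det_unique, ← Matrix.replicateRow_vecMul, Matrix.add_apply, Matrix.one_apply_eq,
    Matrix.replicateRow_mul_replicateCol_apply, ← Matrix.dotProduct_mulVec]

private lemma vecMulVec_neg_left {d : ℕ} (u v : Fin d → ℝ) :
    vecMulVec (-u) v = -vecMulVec u v := by
  ext i j; simp [vecMulVec]

/-- Log-determinant telescoping bound: with `P₁ = p₁ I`, `p₁ > 0`, and
`A_t = P₁⁻¹ + Σ_{s=1}^{t} X_s X_sᵀ`, if `‖X_s‖ ≤ D_X` for all `s` then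
`Σ_{t=1}^{n} X_tᵀ A_t⁻¹ X_t ≤ d log(1 + n p₁ D_X²)`. -/
theorem sum_quadratic_forms_log_bound {d : ℕ} (n : ℕ) (p₁ DX : ℝ)
    (hp₁ : 0 < p₁) (X : ℕ → Fin d → ℝ)
    (hX : ∀ s, Real.sqrt (X s ⬝ᵥ X s) ≤ DX)
    (A : ℕ → Matrix (Fin d) (Fin d) ℝ)
    (hA : ∀ t, A t = p₁⁻¹ • (1 : Matrix (Fin d) (Fin d) ℝ) +
        ∑ s ∈ Finset.Icc 1 t, vecMulVec (X s) (X s)) :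
    ∑ t ∈ Finset.Icc 1 n, X t ⬝ᵥ ((A t)⁻¹ *ᵥ X t) ≤
      d * Real.log (1 + n * p₁ * DX ^ 2) := by
  classical
  have hDX : 0 ≤ DX := le_trans (Real.sqrt_nonneg _) (hX 0)
  have hdot : ∀ s, 0 ≤ X s ⬝ᵥ X s := fun s =>
    Finset.sum_nonneg fun i _ => mul_self_nonneg _
  have hdotB : ∀ s, X s ⬝ᵥ X s ≤ DX ^ 2 := by
    intro s
    have := Real.sq_sqrt (hdot s)
    calc X s ⬝ᵥ X s = Real.sqrt (X s ⬝ᵥ X s) ^ 2 := (Real.sq_sqrt (hdot s)).symm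
      _ ≤ DX ^ 2 := pow_le_pow_left₀ (Real.sqrt_nonneg _) (hX s) 2
  -- positive definiteness
  have hApos : ∀ t, (A t).PosDef := by
    intro t
    rw [hA t]
    have h1 : (p₁⁻¹ • (1 : Matrix (Fin d) (Fin d) ℝ)) = diagonal (fun _ => p₁⁻¹) := by
      ext i j
      rcases eq_or_ne i j with h | h <;>
        simp [h, Matrix.one_apply_eq, Matrix.one_apply_ne, Matrix.diagonal_apply_eq,
          Matrix.diagonal_apply_ne]
    rw [h1]
    exact (Matrix.PosDef.diagonal fun _ => inv_pos.mpr hp₁).add_posSemidef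
      (psd_sum _ _ fun s _ => psd_vecMulVec (X s))
  have hdet : ∀ t, 0 < (A t).det := fun t => (hApos t).det_pos
  set L : ℕ → ℝ := fun t => Real.log (A t).det with hL
  -- successive relation
  have hstep : ∀ t : ℕ, X (t + 1) ⬝ᵥ ((A (t + 1))⁻¹ *ᵥ X (t + 1)) ≤ L (t + 1) - L t := by
    intro t
    set q := X (t + 1) ⬝ᵥ ((A (t + 1))⁻¹ *ᵥ X (t + 1)) with hq
    have hins : Finset.Icc 1 (t + 1) = insert (t + 1) (Finset.Icc 1 t) := by
      ext x
      simp only [Finset.mem_Icc, Finset.mem_insert]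
      omega
    have hrel2 : A (t + 1) = A t + vecMulVec (X (t + 1)) (X (t + 1)) := by
      rw [hA t, hA (t + 1), hins, Finset.sum_insert (by simp)]
      abel
    have hrel : A t = A (t + 1) + vecMulVec (-(X (t + 1))) (X (t + 1)) := by
      rw [vecMulVec_neg_left, hrel2]
      abel
    have hdiv : (A t).det = (A (t + 1)).det * (1 - q) := by
      rw [hrel, det_add_vecMulVec (isUnit_iff_ne_zero.mpr (hdet (t + 1)).ne') _ _,
        mulVec_neg, dotProduct_neg, ← hq]
      ring
    have hb := hdet (t + 1)
    have ha := hdet t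
    have hqval : q = 1 - (A t).det / (A (t + 1)).det := by
      field_simp [hdiv]
      rw [hdiv]; ring
    have hlog : Real.log ((A t).det / (A (t + 1)).det) ≤ (A t).det / (A (t + 1)).det - 1 :=
      Real.log_le_sub_one_of_pos (div_pos ha hb)
    rw [Real.log_div ha.ne' hb.ne'] at hlog
    simp only [hL]
    linarith [hqval, hlog]
  -- telescoping
  have htel : ∑ t ∈ Finset.Icc 1 n, X t ⬝ᵥ ((A t)⁻¹ *ᵥ X t) ≤ L n - L 0 := by
    have h1 : Finset.Icc 1 n = Finset.Ico 1 (n + 1) := by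
      rw [Finset.Ico_add_one_right_eq_Icc]
    rw [h1, Finset.sum_Ico_eq_sum_range]
    simp only [Nat.add_sub_cancel]
    calc ∑ i ∈ Finset.range n, X (1 + i) ⬝ᵥ ((A (1 + i))⁻¹ *ᵥ X (1 + i))
        ≤ ∑ i ∈ Finset.range n, (L (i + 1) - L i) := by
          refine Finset.sum_le_sum fun i _ => ?_
          rw [add_comm 1 i]
          exact hstep i
      _ = L n - L 0 := Finset.sum_range_sub L n
  refine le_trans htel ?_
  -- compute L 0
  have hA0 : (A 0).det = p₁⁻¹ ^ d := by
    rw [hA 0]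
    simp [Matrix.det_smul]
  -- the scaled matrix
  set S : Matrix (Fin d) (Fin d) ℝ :=
    p₁ • ∑ s ∈ Finset.Icc 1 n, vecMulVec (X s) (X s) with hSdef
  have hSpsd : S.PosSemidef := psd_smul (psd_sum _ _ fun s _ => psd_vecMulVec (X s)) hp₁.le
  have hM1 : p₁ • A n = 1 + S := by
    rw [hA n, smul_add, smul_smul, mul_inv_cancel₀ hp₁.ne', one_smul, hSdef]
  -- trace bound
  have htrS : S.trace ≤ n * p₁ * DX ^ 2 := by
    rw [hSdef, Matrix.trace_smul, Matrix.trace_sum]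
    have htr : ∀ s, (vecMulVec (X s) (X s)).trace = X s ⬝ᵥ X s := by
      intro s
      simp [Matrix.trace, Matrix.diag, vecMulVec, dotProduct]
    calc p₁ • ∑ s ∈ Finset.Icc 1 n, (vecMulVec (X s) (X s)).trace
        = p₁ * ∑ s ∈ Finset.Icc 1 n, X s ⬝ᵥ X s := by
          simp only [smul_eq_mul]
          congr 1
      _ ≤ p₁ * (n * DX ^ 2) := by
          refine mul_le_mul_of_nonneg_left ?_ hp₁.le
          calc ∑ s ∈ Finset.Icc 1 n, X s ⬝ᵥ X s ≤ ∑ s ∈ Finset.Icc 1 n, DX ^ 2 :=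
              Finset.sum_le_sum fun s _ => hdotB s
            _ = n * DX ^ 2 := by
              rw [Finset.sum_const, Nat.card_Icc]
              simp [nsmul_eq_mul]
      _ = n * p₁ * DX ^ 2 := by ring
  -- spectral decomposition of S
  have hSh := hSpsd.1
  set μ := hSh.eigenvalues with hμ
  have hμ0 : ∀ i, 0 ≤ μ i := hSpsd.eigenvalues_nonneg
  set U : Matrix (Fin d) (Fin d) ℝ := (hSh.eigenvectorUnitary : Matrix (Fin d) (Fin d) ℝ)
    with hU
  have hUU : U * star U = 1 := Matrix.mem_unitaryGroup_iff.mp hSh.eigenvectorUnitary.2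
  have hUU' : star U * U = 1 := Matrix.mem_unitaryGroup_iff'.mp hSh.eigenvectorUnitary.2
  have hco : (RCLike.ofReal ∘ μ : Fin d → ℝ) = μ := by
    funext i
    simp [RCLike.ofReal_real_eq_id]
  have hspec : S = U * diagonal μ * star U := by
    have h := hSh.spectral_theorem
    rwa [hco] at h
  have hdiag : (1 : Matrix (Fin d) (Fin d) ℝ) + diagonal μ = diagonal (fun i => 1 + μ i) := by
    rw [← Matrix.diagonal_one, Matrix.diagonal_add]
  have hMdecomp : (1 : Matrix (Fin d) (Fin d) ℝ) + S = U * diagonal (fun i => 1 + μ i) * star U := by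
    rw [← hdiag, mul_add, add_mul, mul_one, hUU, hspec]
  have hdetU : U.det * (star U).det = 1 := by
    rw [← Matrix.det_mul, hUU, Matrix.det_one]
  have hdetM : ((1 : Matrix (Fin d) (Fin d) ℝ) + S).det = ∏ i, (1 + μ i) := by
    rw [hMdecomp, Matrix.det_mul, Matrix.det_mul, Matrix.det_diagonal,
      mul_right_comm, hdetU, one_mul]
  -- trace of S is the sum of eigenvalues
  have htrS' : S.trace = ∑ i, μ i := by
    calc S.trace = (U * diagonal μ * star U).trace := by rw [← hspec]
      _ = (star U * (U * diagonal μ)).trace := by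
          rw [Matrix.trace_mul_comm]
      _ = ((star U * U) * diagonal μ).trace := by rw [mul_assoc]
      _ = ∑ i, μ i := by
          rw [hUU', one_mul, Matrix.trace_diagonal]
  have hμle : ∀ i, μ i ≤ n * p₁ * DX ^ 2 := by
    intro i
    calc μ i ≤ ∑ j, μ j := Finset.single_le_sum (fun j _ => hμ0 j) (Finset.mem_univ i)
      _ = S.trace := htrS'.symm
      _ ≤ n * p₁ * DX ^ 2 := htrS
  have hc0 : (0:ℝ) ≤ n * p₁ * DX ^ 2 := by positivity
  have hdetMle : ((1 : Matrix (Fin d) (Fin d) ℝ) + S).det ≤ (1 + n * p₁ * DX ^ 2) ^ d := by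
    rw [hdetM]
    calc ∏ i, (1 + μ i) ≤ ∏ _i : Fin d, (1 + n * p₁ * DX ^ 2) :=
        Finset.prod_le_prod (fun i _ => by linarith [hμ0 i]) (fun i _ => by linarith [hμle i])
      _ = (1 + n * p₁ * DX ^ 2) ^ d := by
        rw [Finset.prod_const, Finset.card_univ, Fintype.card_fin]
  have hdetMpos : 0 < ((1 : Matrix (Fin d) (Fin d) ℝ) + S).det := by
    rw [hdetM]
    exact Finset.prod_pos fun i _ => by linarith [hμ0 i]
  -- relate L n - L 0 to log det (1 + S)
  have hdetscale : ((1 : Matrix (Fin d) (Fin d) ℝ) + S).det = p₁ ^ d * (A n).det := by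
    rw [← hM1, Matrix.det_smul, Fintype.card_fin]
  have hLn : L n - L 0 = Real.log ((1 : Matrix (Fin d) (Fin d) ℝ) + S).det := by
    have hp₁d : (0:ℝ) < p₁ ^ d := pow_pos hp₁ d
    rw [hdetscale, Real.log_mul hp₁d.ne' (hdet n).ne']
    simp only [hL, hA0]
    rw [Real.log_pow, Real.log_pow, Real.log_inv]
    ring
  rw [hLn]
  calc Real.log ((1 : Matrix (Fin d) (Fin d) ℝ) + S).det
      ≤ Real.log ((1 + n * p₁ * DX ^ 2) ^ d) := Real.log_le_log hdetMpos hdetMle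
    _ = d * Real.log (1 + n * p₁ * DX ^ 2) := by rw [Real.log_pow]
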